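/- arXiv:1702.03816 — 5 statements merged into one kernel-verified Lean document; each statement's English description precedes it below -/
import Mathlib

section
/- Let I ⊆ ℝ be an open interval, ω : I → ℝ differentiable, k ∈ ℝ, and let z : I → ℝ be a twice differentiable function with z(x) ≠ 0 for all x ∈ I satisfying the Ermakov-type equation z'' = ω·z + k/z³ on I. Then β := z² is three times differentiable on I and satisfies the third-order linear ODE β''' = 2ω'·β + 4ω·β' on I. -/
/-! Differentiating `β = z²` twice and substituting the equation gives
`β'' = 2 z'² + 2 ω β + 2 k / β`, which involves no `z''`. Differentiating once more, the term
`4 z' z'' = 2 ω β' + 4 k z' / z³` produced by `2 z'²` cancels the derivative of `2 k / β`,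
leaving `β''' = 2 ω' β + 4 ω β'`. -/

section Calculus

variable {𝕜 : Type*} [NontriviallyNormedField 𝕜] {f : 𝕜 → 𝕜} {f' x : 𝕜}

theorem HasDerivAt.fun_sq (hf : HasDerivAt f f' x) :
    HasDerivAt (fun t => f t ^ 2) (2 * f x * f') x := by
  simpa using hf.fun_pow 2

theorem HasDerivAt.const_div_sq (c : 𝕜) (hf : HasDerivAt f f' x) (hx : f x ≠ 0) :
    HasDerivAt (fun t => c / f t ^ 2) (-(2 * c * f' / f x ^ 3)) x := by
  refine ((hasDerivAt_const x c).fun_div hf.fun_sq (pow_ne_zero 2 hx)).congr_deriv ?_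
  field_simp
  ring

end Calculus

section Ermakov

variable {𝕜 : Type*} [NontriviallyNormedField 𝕜] {ω ω' z z' z'' : 𝕜 → 𝕜} {k x : 𝕜}

theorem mul_eq_of_ermakov (hx : z x ≠ 0) (heq : z'' x = ω x * z x + k / z x ^ 3) :
    z x * z'' x = ω x * z x ^ 2 + k / z x ^ 2 := by
  rw [heq]
  field_simp

theorem hasDerivAt_deriv_sq_of_ermakov (hz : HasDerivAt z (z' x) x)
    (hz' : HasDerivAt z' (z'' x) x) (hx : z x ≠ 0) (heq : z'' x = ω x * z x + k / z x ^ 3) :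
    HasDerivAt (fun t => 2 * z t * z' t) (2 * z' x ^ 2 + 2 * ω x * z x ^ 2 + 2 * k / z x ^ 2) x := by
  refine ((hz.const_mul 2).fun_mul hz').congr_deriv ?_
  linear_combination 2 * mul_eq_of_ermakov hx heq

theorem hasDerivAt_deriv2_sq_of_ermakov (hω : HasDerivAt ω (ω' x) x)
    (hz : HasDerivAt z (z' x) x) (hz' : HasDerivAt z' (z'' x) x) (hx : z x ≠ 0)
    (heq : z'' x = ω x * z x + k / z x ^ 3) :
    HasDerivAt (fun t => 2 * z' t ^ 2 + 2 * ω t * z t ^ 2 + 2 * k / z t ^ 2)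
      (2 * ω' x * z x ^ 2 + 4 * ω x * (2 * z x * z' x)) x := by
  have hsum := ((hz'.fun_sq.const_mul 2).fun_add ((hω.const_mul 2).fun_mul hz.fun_sq)).fun_add
    (hz.const_div_sq (2 * k) hx)
  refine hsum.congr_deriv ?_
  rw [heq]
  ring

end Ermakov

/-- If `z` (nonvanishing) solves the Ermakov-type equation `z'' = ω·z + k/z³`
on an open interval with `ω` differentiable, then `β := z²` is three times differentiable
and satisfies the third-order linear ODE `β''' = 2ω'·β + 4ω·β'`. -/
theorem square_of_ermakov_solution_third_order (a b : ℝ)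
    (ω ω' z z' z'' : ℝ → ℝ) (k : ℝ)
    (hω : ∀ x ∈ Set.Ioo a b, HasDerivAt ω (ω' x) x)
    (hz : ∀ x ∈ Set.Ioo a b, HasDerivAt z (z' x) x)
    (hz' : ∀ x ∈ Set.Ioo a b, HasDerivAt z' (z'' x) x)
    (hz0 : ∀ x ∈ Set.Ioo a b, z x ≠ 0)
    (hzeq : ∀ x ∈ Set.Ioo a b, z'' x = ω x * z x + k / z x ^ 3) :
    ∃ β' β'' β''' : ℝ → ℝ, ∀ x ∈ Set.Ioo a b,
      HasDerivAt (fun t => z t ^ 2) (β' x) x ∧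
      HasDerivAt β' (β'' x) x ∧
      HasDerivAt β'' (β''' x) x ∧
      β''' x = 2 * ω' x * z x ^ 2 + 4 * ω x * β' x :=
  ⟨fun x => 2 * z x * z' x, fun x => 2 * z' x ^ 2 + 2 * ω x * z x ^ 2 + 2 * k / z x ^ 2,
    fun x => 2 * ω' x * z x ^ 2 + 4 * ω x * (2 * z x * z' x), fun x hx =>
    ⟨(hz x hx).fun_sq,
      hasDerivAt_deriv_sq_of_ermakov (hz x hx) (hz' x hx) (hz0 x hx) (hzeq x hx),
      hasDerivAt_deriv2_sq_of_ermakov (hω x hx) (hz x hx) (hz' x hx) (hz0 x hx) (hzeq x hx),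
      rfl⟩⟩
end

section
/- Let I ⊆ ℝ be an open interval, ω : I → ℝ continuous, and let y₁, y₂ : I → ℝ be twice differentiable with y₁'' = ω·y₁ and y₂'' = ω·y₂ on I. Let A, B, C, W be real constants such that y₁(x)·y₂'(x) − y₁'(x)·y₂(x) = W for all x ∈ I, and suppose A·y₁(x)² + B·y₁(x)·y₂(x) + C·y₂(x)² > 0 for all x ∈ I. Then z(x) := √(A·y₁(x)² + B·y₁(x)·y₂(x) + C·y₂(x)²) is twice differentiable on I and satisfies z'' = ω·z + k/z³ on I, where k = (A·C − B²/4)·W². -/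
/-!
Write `Q(u, v) = A u² + B u v + C v²` and `β` for its polar form, so that `Q = β(y, y)` along
`y = (y₁, y₂)`. Then `Q' = 2 β(y, y')` and, since `y'' = ω y`, `Q'' = 2 Q(y') + 2 ω Q(y)`.
The Lagrange-type identity `Q(y) Q(y') - β(y, y')² = (A C - B²/4) (y₁ y₂' - y₁' y₂)²` turns this
into `2 Q Q'' - Q'² = 4 ω Q² + 4 k`, which is exactly the Ermakov equation for `z = √Q`.
-/

def binaryQuadForm (A B C u v : ℝ) : ℝ := A * u ^ 2 + B * u * v + C * v ^ 2

noncomputable def binaryPolarForm (A B C u v p q : ℝ) : ℝ :=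
  A * u * p + B / 2 * (u * q + v * p) + C * v * q

section Algebra

variable (A B C : ℝ)

theorem binaryPolarForm_self (u v : ℝ) :
    binaryPolarForm A B C u v u v = binaryQuadForm A B C u v := by
  unfold binaryPolarForm binaryQuadForm; ring

theorem binaryPolarForm_smul_right (u v c : ℝ) :
    binaryPolarForm A B C u v (c * u) (c * v) = c * binaryQuadForm A B C u v := by
  unfold binaryPolarForm binaryQuadForm; ring

theorem binaryQuadForm_mul_sub_binaryPolarForm_sq (u v p q : ℝ) :
    binaryQuadForm A B C u v * binaryQuadForm A B C p q - binaryPolarForm A B C u v p q ^ 2 =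
      (A * C - B ^ 2 / 4) * (u * q - p * v) ^ 2 := by
  unfold binaryPolarForm binaryQuadForm; ring

end Algebra

section Derivatives

variable {A B C x : ℝ} {u v p q : ℝ → ℝ} {u' v' p' q' : ℝ}

theorem hasDerivAt_binaryPolarForm (hu : HasDerivAt u u' x) (hv : HasDerivAt v v' x)
    (hp : HasDerivAt p p' x) (hq : HasDerivAt q q' x) :
    HasDerivAt (fun t => binaryPolarForm A B C (u t) (v t) (p t) (q t))
      (binaryPolarForm A B C u' v' (p x) (q x) + binaryPolarForm A B C (u x) (v x) p' q') x := by
  unfold binaryPolarForm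
  refine ((((hu.const_mul A).mul hp).add
    (((hu.mul hq).add (hv.mul hp)).const_mul (B / 2))).add ((hv.const_mul C).mul hq)).congr_deriv ?_
  ring

theorem hasDerivAt_binaryQuadForm (hu : HasDerivAt u u' x) (hv : HasDerivAt v v' x) :
    HasDerivAt (fun t => binaryQuadForm A B C (u t) (v t))
      (2 * binaryPolarForm A B C (u x) (v x) u' v') x := by
  simpa only [binaryPolarForm_self] using
    (hasDerivAt_binaryPolarForm (A := A) (B := B) (C := C) hu hv hu hv).congr_deriv
      (by unfold binaryPolarForm; ring)

end Derivatives

theorem HasDerivAt.deriv_sqrt_eq_ermakov {f f' : ℝ → ℝ} {f'' ω k x : ℝ}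
    (hf : HasDerivAt f (f' x) x) (hf' : HasDerivAt f' f'' x) (hx : 0 < f x)
    (h : 2 * f x * f'' - f' x ^ 2 = 4 * ω * f x ^ 2 + 4 * k) :
    HasDerivAt (fun t => f' t / (2 * √(f t))) (ω * √(f x) + k / √(f x) ^ 3) x := by
  have hz : 0 < √(f x) := Real.sqrt_pos.2 hx
  have hz2 : √(f x) ^ 2 = f x := Real.sq_sqrt hx.le
  refine (hf'.div ((hf.sqrt hx.ne').const_mul 2) (by positivity)).congr_deriv ?_
  field_simp
  linear_combination h + (2 * f'' - 4 * ω * (√(f x) ^ 2 + f x)) * hz2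

theorem quadratic_combination_solves_ermakov_general (a b : ℝ)
    (ω y₁ y₁' y₁'' y₂ y₂' y₂'' : ℝ → ℝ)
    (hy₁ : ∀ x ∈ Set.Ioo a b, HasDerivAt y₁ (y₁' x) x)
    (hy₁' : ∀ x ∈ Set.Ioo a b, HasDerivAt y₁' (y₁'' x) x)
    (hy₁eq : ∀ x ∈ Set.Ioo a b, y₁'' x = ω x * y₁ x)
    (hy₂ : ∀ x ∈ Set.Ioo a b, HasDerivAt y₂ (y₂' x) x)
    (hy₂' : ∀ x ∈ Set.Ioo a b, HasDerivAt y₂' (y₂'' x) x)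
    (hy₂eq : ∀ x ∈ Set.Ioo a b, y₂'' x = ω x * y₂ x)
    (A B C W : ℝ)
    (hW : ∀ x ∈ Set.Ioo a b, y₁ x * y₂' x - y₁' x * y₂ x = W)
    (hpos : ∀ x ∈ Set.Ioo a b,
      0 < A * y₁ x ^ 2 + B * y₁ x * y₂ x + C * y₂ x ^ 2) :
    ∃ zd zdd : ℝ → ℝ, ∀ x ∈ Set.Ioo a b,
      HasDerivAt (fun t => Real.sqrt (A * y₁ t ^ 2 + B * y₁ t * y₂ t + C * y₂ t ^ 2))
        (zd x) x ∧
      HasDerivAt zd (zdd x) x ∧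
      zdd x = ω x * Real.sqrt (A * y₁ x ^ 2 + B * y₁ x * y₂ x + C * y₂ x ^ 2) +
        (A * C - B ^ 2 / 4) * W ^ 2 /
          Real.sqrt (A * y₁ x ^ 2 + B * y₁ x * y₂ x + C * y₂ x ^ 2) ^ 3 := by
  set Q := fun t => binaryQuadForm A B C (y₁ t) (y₂ t)
  set Q' := fun t => 2 * binaryPolarForm A B C (y₁ t) (y₂ t) (y₁' t) (y₂' t)
  refine ⟨fun t => Q' t / (2 * √(Q t)),
    fun t => ω t * √(Q t) + (A * C - B ^ 2 / 4) * W ^ 2 / √(Q t) ^ 3, fun x hx => ?_⟩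
  have hQ : HasDerivAt Q (Q' x) x := hasDerivAt_binaryQuadForm (hy₁ x hx) (hy₂ x hx)
  have hQ' : HasDerivAt Q' (2 * (binaryPolarForm A B C (y₁' x) (y₂' x) (y₁' x) (y₂' x) +
      binaryPolarForm A B C (y₁ x) (y₂ x) (y₁'' x) (y₂'' x))) x :=
    (hasDerivAt_binaryPolarForm (hy₁ x hx) (hy₂ x hx) (hy₁' x hx) (hy₂' x hx)).const_mul 2
  refine ⟨hQ.sqrt (hpos x hx).ne', hQ.deriv_sqrt_eq_ermakov hQ' (hpos x hx) ?_, rfl⟩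
  rw [hy₁eq x hx, hy₂eq x hx, binaryPolarForm_self, binaryPolarForm_smul_right, ← hW x hx]
  linear_combination
    4 * binaryQuadForm_mul_sub_binaryPolarForm_sq A B C (y₁ x) (y₂ x) (y₁' x) (y₂' x)

/-- If `y₁, y₂` solve `y'' = ω·y` on an open interval with constant Wronskian
`W`, and `A·y₁² + B·y₁·y₂ + C·y₂² > 0` there, then `z := √(A·y₁² + B·y₁·y₂ + C·y₂²)` is twice
differentiable and satisfies the Ermakov-type equation `z'' = ω·z + k/z³`, where
`k = (A·C − B²/4)·W²`. -/
theorem quadratic_combination_solves_ermakov (a b : ℝ)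
    (ω y₁ y₁' y₁'' y₂ y₂' y₂'' : ℝ → ℝ)
    (hω : ContinuousOn ω (Set.Ioo a b))
    (hy₁ : ∀ x ∈ Set.Ioo a b, HasDerivAt y₁ (y₁' x) x)
    (hy₁' : ∀ x ∈ Set.Ioo a b, HasDerivAt y₁' (y₁'' x) x)
    (hy₁eq : ∀ x ∈ Set.Ioo a b, y₁'' x = ω x * y₁ x)
    (hy₂ : ∀ x ∈ Set.Ioo a b, HasDerivAt y₂ (y₂' x) x)
    (hy₂' : ∀ x ∈ Set.Ioo a b, HasDerivAt y₂' (y₂'' x) x)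
    (hy₂eq : ∀ x ∈ Set.Ioo a b, y₂'' x = ω x * y₂ x)
    (A B C W : ℝ)
    (hW : ∀ x ∈ Set.Ioo a b, y₁ x * y₂' x - y₁' x * y₂ x = W)
    (hpos : ∀ x ∈ Set.Ioo a b,
      0 < A * y₁ x ^ 2 + B * y₁ x * y₂ x + C * y₂ x ^ 2) :
    ∃ zd zdd : ℝ → ℝ, ∀ x ∈ Set.Ioo a b,
      HasDerivAt (fun t => Real.sqrt (A * y₁ t ^ 2 + B * y₁ t * y₂ t + C * y₂ t ^ 2))
        (zd x) x ∧
      HasDerivAt zd (zdd x) x ∧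
      zdd x = ω x * Real.sqrt (A * y₁ x ^ 2 + B * y₁ x * y₂ x + C * y₂ x ^ 2) +
        (A * C - B ^ 2 / 4) * W ^ 2 /
          Real.sqrt (A * y₁ x ^ 2 + B * y₁ x * y₂ x + C * y₂ x ^ 2) ^ 3 :=
  quadratic_combination_solves_ermakov_general a b ω y₁ y₁' y₁'' y₂ y₂' y₂'' hy₁ hy₁' hy₁eq hy₂ hy₂'
    hy₂eq A B C W hW hpos
end

section
/- Let ω : ℝ → ℝ be continuously differentiable, and let y₁, y₂ : ℝ → ℝ be twice differentiable solutions of y'' = ω·y whose Wronskian y₁·y₂' − y₁'·y₂ is a nonzero constant W. Then every three times differentiable function β : ℝ → ℝ satisfying β''' = 2ω'·β + 4ω·β' on ℝ can be written as β = A·y₁² + B·y₁·y₂ + C·y₂² for some real constants A, B, C; that is, the solution set of the third-order equation coincides with the span of y₁², y₁·y₂, y₂². -/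
/-! For solutions `q₁, q₂` of `q'' = ω q`, the bilinear concomitant
`q₁q₂ β'' − (q₁q₂)' β' + 2(q₁'q₂' − ω q₁q₂) β` of the third-order operator is a first integral of
`β''' = 2ω'β + 4ωβ'`. Evaluating it on the pairs `(y₂, y₂)`, `(y₁, y₂)`, `(y₁, y₁)` gives three
constants, and the combination `y₁²·I₂₂ − 2y₁y₂·I₁₂ + y₂²·I₁₁` eliminates `β''` and `β'`, leaving
`2W²β`. -/

def concomitant (w q₁ q₁' q₂ q₂' b b' b'' : ℝ) : ℝ :=
  q₁ * q₂ * b'' - (q₁ * q₂' + q₁' * q₂) * b' + 2 * (q₁' * q₂' - w * (q₁ * q₂)) * b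

theorem concomitant_combination (w a a' c c' b b' b'' : ℝ) :
    a ^ 2 * concomitant w c c' c c' b b' b'' - 2 * (a * c) * concomitant w a a' c c' b b' b''
      + c ^ 2 * concomitant w a a' a a' b b' b'' = 2 * (a * c' - a' * c) ^ 2 * b := by
  unfold concomitant
  ring

section FirstIntegral

variable {ω ω' q₁ q₁' q₂ q₂' β β' β'' β''' : ℝ → ℝ}

theorem hasDerivAt_concomitant {x : ℝ} (hω : HasDerivAt ω (ω' x) x)
    (hq₁ : HasDerivAt q₁ (q₁' x) x) (hq₁' : HasDerivAt q₁' (ω x * q₁ x) x)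
    (hq₂ : HasDerivAt q₂ (q₂' x) x) (hq₂' : HasDerivAt q₂' (ω x * q₂ x) x)
    (hβ : HasDerivAt β (β' x) x) (hβ' : HasDerivAt β' (β'' x) x)
    (hβ'' : HasDerivAt β'' (β''' x) x)
    (hβeq : β''' x = 2 * ω' x * β x + 4 * ω x * β' x) :
    HasDerivAt (fun t ↦ concomitant (ω t) (q₁ t) (q₁' t) (q₂ t) (q₂' t) (β t) (β' t) (β'' t))
      0 x := by
  have h := (((hq₁.mul hq₂).mul hβ'').sub (((hq₁.mul hq₂').add (hq₁'.mul hq₂)).mul hβ')).add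
    ((((hq₁'.mul hq₂').sub (hω.mul (hq₁.mul hq₂))).const_mul (2 : ℝ)).mul hβ)
  refine h.congr_deriv ?_
  simp only [Pi.mul_apply, Pi.add_apply, Pi.sub_apply, hβeq]
  ring

theorem exists_concomitant_eq_const (hω : ∀ x, HasDerivAt ω (ω' x) x)
    (hq₁ : ∀ x, HasDerivAt q₁ (q₁' x) x) (hq₁' : ∀ x, HasDerivAt q₁' (ω x * q₁ x) x)
    (hq₂ : ∀ x, HasDerivAt q₂ (q₂' x) x) (hq₂' : ∀ x, HasDerivAt q₂' (ω x * q₂ x) x)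
    (hβ : ∀ x, HasDerivAt β (β' x) x) (hβ' : ∀ x, HasDerivAt β' (β'' x) x)
    (hβ'' : ∀ x, HasDerivAt β'' (β''' x) x)
    (hβeq : ∀ x, β''' x = 2 * ω' x * β x + 4 * ω x * β' x) :
    ∃ c, ∀ x, concomitant (ω x) (q₁ x) (q₁' x) (q₂ x) (q₂' x) (β x) (β' x) (β'' x) = c := by
  have hderiv x := hasDerivAt_concomitant (hω x) (hq₁ x) (hq₁' x) (hq₂ x) (hq₂' x) (hβ x)
    (hβ' x) (hβ'' x) (hβeq x)
  exact ⟨_, fun x ↦ is_const_of_deriv_eq_zero (fun t ↦ (hderiv t).differentiableAt)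
    (fun t ↦ (hderiv t).deriv) x 0⟩

end FirstIntegral

theorem third_order_solutions_spanned_by_products_general
    (ω ω' y₁ y₁' y₁'' y₂ y₂' y₂'' : ℝ → ℝ)
    (hω : ∀ x, HasDerivAt ω (ω' x) x)
    (hy₁ : ∀ x, HasDerivAt y₁ (y₁' x) x)
    (hy₁' : ∀ x, HasDerivAt y₁' (y₁'' x) x)
    (hy₁eq : ∀ x, y₁'' x = ω x * y₁ x)
    (hy₂ : ∀ x, HasDerivAt y₂ (y₂' x) x)
    (hy₂' : ∀ x, HasDerivAt y₂' (y₂'' x) x)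
    (hy₂eq : ∀ x, y₂'' x = ω x * y₂ x)
    (W : ℝ) (hW0 : W ≠ 0)
    (hW : ∀ x, y₁ x * y₂' x - y₁' x * y₂ x = W)
    (β β' β'' β''' : ℝ → ℝ)
    (hβ : ∀ x, HasDerivAt β (β' x) x)
    (hβ' : ∀ x, HasDerivAt β' (β'' x) x)
    (hβ'' : ∀ x, HasDerivAt β'' (β''' x) x)
    (hβeq : ∀ x, β''' x = 2 * ω' x * β x + 4 * ω x * β' x) :
    ∃ A B C : ℝ, ∀ x, β x = A * y₁ x ^ 2 + B * (y₁ x * y₂ x) + C * y₂ x ^ 2 := by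
  have hy₁'' x : HasDerivAt y₁' (ω x * y₁ x) x := hy₁eq x ▸ hy₁' x
  have hy₂'' x : HasDerivAt y₂' (ω x * y₂ x) x := hy₂eq x ▸ hy₂' x
  obtain ⟨c₂₂, hc₂₂⟩ := exists_concomitant_eq_const hω hy₂ hy₂'' hy₂ hy₂'' hβ hβ' hβ'' hβeq
  obtain ⟨c₁₂, hc₁₂⟩ := exists_concomitant_eq_const hω hy₁ hy₁'' hy₂ hy₂'' hβ hβ' hβ'' hβeq
  obtain ⟨c₁₁, hc₁₁⟩ := exists_concomitant_eq_const hω hy₁ hy₁'' hy₁ hy₁'' hβ hβ' hβ'' hβeq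
  refine ⟨c₂₂ / (2 * W ^ 2), -c₁₂ / W ^ 2, c₁₁ / (2 * W ^ 2), fun x ↦ ?_⟩
  have key := concomitant_combination (ω x) (y₁ x) (y₁' x) (y₂ x) (y₂' x) (β x) (β' x) (β'' x)
  rw [hc₂₂, hc₁₂, hc₁₁, hW] at key
  field_simp
  linear_combination -key

/-- If `y₁, y₂` solve `y'' = ω·y` on ℝ (`ω` continuously differentiable) with
nonzero constant Wronskian `W`, then every solution `β` of the third-order equation
`β''' = 2ω'·β + 4ω·β'` is a linear combination `β = A·y₁² + B·y₁·y₂ + C·y₂²`. -/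
theorem third_order_solutions_spanned_by_products
    (ω ω' y₁ y₁' y₁'' y₂ y₂' y₂'' : ℝ → ℝ)
    (hω : ∀ x, HasDerivAt ω (ω' x) x) (hω' : Continuous ω')
    (hy₁ : ∀ x, HasDerivAt y₁ (y₁' x) x)
    (hy₁' : ∀ x, HasDerivAt y₁' (y₁'' x) x)
    (hy₁eq : ∀ x, y₁'' x = ω x * y₁ x)
    (hy₂ : ∀ x, HasDerivAt y₂ (y₂' x) x)
    (hy₂' : ∀ x, HasDerivAt y₂' (y₂'' x) x)
    (hy₂eq : ∀ x, y₂'' x = ω x * y₂ x)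
    (W : ℝ) (hW0 : W ≠ 0)
    (hW : ∀ x, y₁ x * y₂' x - y₁' x * y₂ x = W)
    (β β' β'' β''' : ℝ → ℝ)
    (hβ : ∀ x, HasDerivAt β (β' x) x)
    (hβ' : ∀ x, HasDerivAt β' (β'' x) x)
    (hβ'' : ∀ x, HasDerivAt β'' (β''' x) x)
    (hβeq : ∀ x, β''' x = 2 * ω' x * β x + 4 * ω x * β' x) :
    ∃ A B C : ℝ, ∀ x, β x = A * y₁ x ^ 2 + B * (y₁ x * y₂ x) + C * y₂ x ^ 2 :=
  third_order_solutions_spanned_by_products_general ω ω' y₁ y₁' y₁'' y₂ y₂' y₂'' hω hy₁ hy₁' hy₁eq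
    hy₂ hy₂' hy₂eq W hW0 hW β β' β'' β''' hβ hβ' hβ'' hβeq
end

section
/- Let ω : ℝ → ℝ be continuously differentiable, k ∈ ℝ, and let z : ℝ → ℝ be twice differentiable with z(x) > 0 for all x satisfying z'' = ω·z + k/z³ on ℝ. Let y₁, y₂ : ℝ → ℝ be twice differentiable solutions of y'' = ω·y whose Wronskian y₁·y₂' − y₁'·y₂ is a nonzero constant W. Then there exist real constants A, B, C such that z(x)² = A·y₁(x)² + B·y₁(x)·y₂(x) + C·y₂(x)² for all x ∈ ℝ and (A·C − B²/4)·W² = k. -/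
/-!
For solutions `u, v` of `y'' = ω y` and a nonvanishing solution `z` of `z'' = ω z + k / z³`, the
Ermakov–Lewis pairing `(z u' − z' u)(z v' − z' v) + k u v / z²` is constant in `x`. Applying it to
the pairs `(y₁, y₁)`, `(y₁, y₂)`, `(y₂, y₂)` gives three constants `I₁₁, I₁₂, I₂₂`. Since
`y₁ (z y₂' − z' y₂) − y₂ (z y₁' − z' y₁) = z W`, squaring expresses `z² W²` as the binary quadratic
form `I₂₂ y₁² − 2 I₁₂ y₁ y₂ + I₁₁ y₂²`, whose discriminant-type invariant `I₁₁ I₂₂ − I₁₂²` equals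
`k W²`.
-/

noncomputable def ermakovPairing (k z z' u u' v v' : ℝ) : ℝ :=
  (z * u' - z' * u) * (z * v' - z' * v) + k * u * v / z ^ 2

theorem sq_mul_sq_wronskian_eq_ermakovPairing {k z z' a a' b b' : ℝ} (hz : z ≠ 0) :
    z ^ 2 * (a * b' - a' * b) ^ 2 =
      a ^ 2 * ermakovPairing k z z' b b' b b' - 2 * (a * b) * ermakovPairing k z z' a a' b b'
        + b ^ 2 * ermakovPairing k z z' a a' a a' := by
  unfold ermakovPairing
  field_simp
  ring

theorem ermakovPairing_mul_sub_sq {k z z' a a' b b' : ℝ} (hz : z ≠ 0) :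
    ermakovPairing k z z' a a' a a' * ermakovPairing k z z' b b' b b'
        - ermakovPairing k z z' a a' b b' ^ 2 = k * (a * b' - a' * b) ^ 2 := by
  unfold ermakovPairing
  field_simp
  ring

section Derivatives

variable {k w x : ℝ} {z z' u u' v v' : ℝ → ℝ} {z'' u'' v'' : ℝ}

theorem hasDerivAt_ermakov_wronskian (hz : HasDerivAt z (z' x) x) (hz' : HasDerivAt z' z'' x)
    (hu : HasDerivAt u (u' x) x) (hu' : HasDerivAt u' u'' x)
    (hzeq : z'' = w * z x + k / z x ^ 3) (hueq : u'' = w * u x) :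
    HasDerivAt (fun t => z t * u' t - z' t * u t) (-(k * u x / z x ^ 3)) x := by
  refine ((hz.mul hu').sub (hz'.mul hu)).congr_deriv ?_
  rw [hzeq, hueq]
  ring

theorem hasDerivAt_ermakovPairing (hz : HasDerivAt z (z' x) x) (hz' : HasDerivAt z' z'' x)
    (hu : HasDerivAt u (u' x) x) (hu' : HasDerivAt u' u'' x)
    (hv : HasDerivAt v (v' x) x) (hv' : HasDerivAt v' v'' x) (hzx : z x ≠ 0)
    (hzeq : z'' = w * z x + k / z x ^ 3) (hueq : u'' = w * u x) (hveq : v'' = w * v x) :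
    HasDerivAt (fun t => ermakovPairing k (z t) (z' t) (u t) (u' t) (v t) (v' t)) 0 x := by
  have hp := hasDerivAt_ermakov_wronskian hz hz' hu hu' hzeq hueq
  have hq := hasDerivAt_ermakov_wronskian hz hz' hv hv' hzeq hveq
  have hr := ((hu.const_mul k).fun_mul hv).fun_div (hz.fun_pow 2) (pow_ne_zero 2 hzx)
  refine ((hp.mul hq).add hr).congr_deriv ?_
  field_simp
  ring

end Derivatives

theorem ermakovPairing_eq_of_ode {k : ℝ} {ω z z' z'' u u' u'' v v' v'' : ℝ → ℝ}
    (hz : ∀ x, HasDerivAt z (z' x) x) (hz' : ∀ x, HasDerivAt z' (z'' x) x)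
    (hzne : ∀ x, z x ≠ 0) (hzeq : ∀ x, z'' x = ω x * z x + k / z x ^ 3)
    (hu : ∀ x, HasDerivAt u (u' x) x) (hu' : ∀ x, HasDerivAt u' (u'' x) x)
    (hueq : ∀ x, u'' x = ω x * u x)
    (hv : ∀ x, HasDerivAt v (v' x) x) (hv' : ∀ x, HasDerivAt v' (v'' x) x)
    (hveq : ∀ x, v'' x = ω x * v x) (x y : ℝ) :
    ermakovPairing k (z x) (z' x) (u x) (u' x) (v x) (v' x) =
      ermakovPairing k (z y) (z' y) (u y) (u' y) (v y) (v' y) := by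
  have hderiv x := hasDerivAt_ermakovPairing (hz x) (hz' x) (hu x) (hu' x) (hv x) (hv' x)
    (hzne x) (hzeq x) (hueq x) (hveq x)
  exact is_const_of_deriv_eq_zero (fun x => (hderiv x).differentiableAt)
    (fun x => (hderiv x).deriv) x y

theorem ermakov_solution_pinney_representation_general
    (ω : ℝ → ℝ) (k : ℝ) (z z' z'' : ℝ → ℝ)
    (hz : ∀ x, HasDerivAt z (z' x) x)
    (hz' : ∀ x, HasDerivAt z' (z'' x) x)
    (hzpos : ∀ x, 0 < z x)
    (hzeq : ∀ x, z'' x = ω x * z x + k / z x ^ 3)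
    (y₁ y₁' y₁'' y₂ y₂' y₂'' : ℝ → ℝ)
    (hy₁ : ∀ x, HasDerivAt y₁ (y₁' x) x)
    (hy₁' : ∀ x, HasDerivAt y₁' (y₁'' x) x)
    (hy₁eq : ∀ x, y₁'' x = ω x * y₁ x)
    (hy₂ : ∀ x, HasDerivAt y₂ (y₂' x) x)
    (hy₂' : ∀ x, HasDerivAt y₂' (y₂'' x) x)
    (hy₂eq : ∀ x, y₂'' x = ω x * y₂ x)
    (W : ℝ) (hW0 : W ≠ 0)
    (hW : ∀ x, y₁ x * y₂' x - y₁' x * y₂ x = W) :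
    ∃ A B C : ℝ,
      (∀ x, z x ^ 2 = A * y₁ x ^ 2 + B * (y₁ x * y₂ x) + C * y₂ x ^ 2) ∧
      (A * C - B ^ 2 / 4) * W ^ 2 = k := by
  have hzne x := (hzpos x).ne'
  set I := fun x (u u' v v' : ℝ → ℝ) => ermakovPairing k (z x) (z' x) (u x) (u' x) (v x) (v' x)
  have hI₁₁ := ermakovPairing_eq_of_ode hz hz' hzne hzeq hy₁ hy₁' hy₁eq hy₁ hy₁' hy₁eq
  have hI₁₂ := ermakovPairing_eq_of_ode hz hz' hzne hzeq hy₁ hy₁' hy₁eq hy₂ hy₂' hy₂eq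
  have hI₂₂ := ermakovPairing_eq_of_ode hz hz' hzne hzeq hy₂ hy₂' hy₂eq hy₂ hy₂' hy₂eq
  refine ⟨I 0 y₂ y₂' y₂ y₂' / W ^ 2, -2 * I 0 y₁ y₁' y₂ y₂' / W ^ 2,
    I 0 y₁ y₁' y₁ y₁' / W ^ 2, fun x => ?_, ?_⟩
  · have hform := sq_mul_sq_wronskian_eq_ermakovPairing (k := k) (z' := z' x) (hzne x)
      (a := y₁ x) (a' := y₁' x) (b := y₂ x) (b' := y₂' x)
    rw [hW x, hI₁₁ x 0, hI₁₂ x 0, hI₂₂ x 0] at hform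
    field_simp
    linear_combination hform
  · have hdet := ermakovPairing_mul_sub_sq (k := k) (z' := z' 0) (hzne 0)
      (a := y₁ 0) (a' := y₁' 0) (b := y₂ 0) (b' := y₂' 0)
    rw [hW 0] at hdet
    field_simp
    linear_combination 4 * hdet

/-- If `z > 0` solves the Ermakov-type equation `z'' = ω·z + k/z³` on ℝ and
`y₁, y₂` solve `y'' = ω·y` with nonzero constant Wronskian `W`, then
`z² = A·y₁² + B·y₁·y₂ + C·y₂²` for constants `A, B, C` with `(A·C − B²/4)·W² = k`. -/
theorem ermakov_solution_pinney_representation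
    (ω ω' : ℝ → ℝ) (k : ℝ) (z z' z'' : ℝ → ℝ)
    (hω : ∀ x, HasDerivAt ω (ω' x) x) (hω' : Continuous ω')
    (hz : ∀ x, HasDerivAt z (z' x) x)
    (hz' : ∀ x, HasDerivAt z' (z'' x) x)
    (hzpos : ∀ x, 0 < z x)
    (hzeq : ∀ x, z'' x = ω x * z x + k / z x ^ 3)
    (y₁ y₁' y₁'' y₂ y₂' y₂'' : ℝ → ℝ)
    (hy₁ : ∀ x, HasDerivAt y₁ (y₁' x) x)
    (hy₁' : ∀ x, HasDerivAt y₁' (y₁'' x) x)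
    (hy₁eq : ∀ x, y₁'' x = ω x * y₁ x)
    (hy₂ : ∀ x, HasDerivAt y₂ (y₂' x) x)
    (hy₂' : ∀ x, HasDerivAt y₂' (y₂'' x) x)
    (hy₂eq : ∀ x, y₂'' x = ω x * y₂ x)
    (W : ℝ) (hW0 : W ≠ 0)
    (hW : ∀ x, y₁ x * y₂' x - y₁' x * y₂ x = W) :
    ∃ A B C : ℝ,
      (∀ x, z x ^ 2 = A * y₁ x ^ 2 + B * (y₁ x * y₂ x) + C * y₂ x ^ 2) ∧
      (A * C - B ^ 2 / 4) * W ^ 2 = k :=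
  ermakov_solution_pinney_representation_general ω k z z' z'' hz hz' hzpos hzeq y₁ y₁' y₁'' y₂ y₂'
    y₂'' hy₁ hy₁' hy₁eq hy₂ hy₂' hy₂eq W hW0 hW
end

section
/- Let λ ∈ ℂ and q₁, q₂ : ℝ → ℂ be continuous, let x₀ ∈ ℝ, and let f = (f₁, f₂) be a differentiable ℂ²-valued function on ℝ satisfying the Dirac equation f₁' = λ·f₁ + q₁·f₂, f₂' = q₂·f₁ − λ·f₂. Then for all x ∈ ℝ the squared components satisfy the integro-differential determining equations: (f₁²)'(x) − 2λ·f₁(x)² − 2q₁(x)·( f₁(x₀)·f₂(x₀) + ∫_{x₀}^{x} (q₂(t)·f₁(t)² + q₁(t)·f₂(t)²) dt ) = 0 and (f₂²)'(x) + 2λ·f₂(x)² − 2q₂(x)·( f₁(x₀)·f₂(x₀) + ∫_{x₀}^{x} (q₂(t)·f₁(t)² + q₁(t)·f₂(t)²) dt ) = 0. -/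
/-! The product `f₁ f₂` of the components of a Dirac solution has derivative
`q₂ f₁² + q₁ f₂²`: the `λ`-terms cancel. Integrating from `x₀` expresses `f₁ f₂` through
the squares, and substituting this into `(f₁²)' = 2 f₁ f₁'` and `(f₂²)' = 2 f₂ f₂'` gives
the two determining equations. -/

section Dirac

variable {lam : ℂ} {q₁ q₂ f₁ f₂ : ℝ → ℂ}

theorem dirac_hasDerivAt_mul {x : ℝ} (hf₁ : HasDerivAt f₁ (lam * f₁ x + q₁ x * f₂ x) x)
    (hf₂ : HasDerivAt f₂ (q₂ x * f₁ x - lam * f₂ x) x) :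
    HasDerivAt (fun t => f₁ t * f₂ t) (q₂ x * f₁ x ^ 2 + q₁ x * f₂ x ^ 2) x :=
  (hf₁.fun_mul hf₂).congr_deriv (by ring)

theorem dirac_mul_eq_add_integral (hq₁ : Continuous q₁) (hq₂ : Continuous q₂)
    (hf₁ : ∀ x, HasDerivAt f₁ (lam * f₁ x + q₁ x * f₂ x) x)
    (hf₂ : ∀ x, HasDerivAt f₂ (q₂ x * f₁ x - lam * f₂ x) x) (x₀ x : ℝ) :
    f₁ x * f₂ x = f₁ x₀ * f₂ x₀ + ∫ t in x₀..x, (q₂ t * f₁ t ^ 2 + q₁ t * f₂ t ^ 2) := by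
  have hc₁ : Continuous f₁ := continuous_iff_continuousAt.2 fun t => (hf₁ t).continuousAt
  have hc₂ : Continuous f₂ := continuous_iff_continuousAt.2 fun t => (hf₂ t).continuousAt
  have hint : IntervalIntegrable (fun t => q₂ t * f₁ t ^ 2 + q₁ t * f₂ t ^ 2) MeasureTheory.volume x₀ x :=
    ((hq₂.mul (hc₁.pow 2)).add (hq₁.mul (hc₂.pow 2))).intervalIntegrable x₀ x
  rw [intervalIntegral.integral_eq_sub_of_hasDerivAt
    (fun t _ => dirac_hasDerivAt_mul (hf₁ t) (hf₂ t)) hint]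
  ring

theorem dirac_deriv_sq_fst {x : ℝ} (hf₁ : HasDerivAt f₁ (lam * f₁ x + q₁ x * f₂ x) x) :
    deriv (fun t => f₁ t ^ 2) x = 2 * lam * f₁ x ^ 2 + 2 * q₁ x * (f₁ x * f₂ x) := by
  rw [(hf₁.fun_pow 2).deriv]
  push_cast
  ring

theorem dirac_deriv_sq_snd {x : ℝ} (hf₂ : HasDerivAt f₂ (q₂ x * f₁ x - lam * f₂ x) x) :
    deriv (fun t => f₂ t ^ 2) x = -2 * lam * f₂ x ^ 2 + 2 * q₂ x * (f₁ x * f₂ x) := by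
  rw [(hf₂.fun_pow 2).deriv]
  push_cast
  ring

end Dirac

/-- For a solution `(f₁, f₂)` of the Dirac equation, eliminating the product
`f₁·f₂` by integration yields the integro-differential determining equations for the
squares `f₁²`, `f₂²`. -/
theorem dirac_squares_integro_differential (lam : ℂ) (q₁ q₂ : ℝ → ℂ)
    (hq₁ : Continuous q₁) (hq₂ : Continuous q₂) (x₀ : ℝ)
    (f₁ f₂ : ℝ → ℂ)
    (hf₁ : ∀ x, HasDerivAt f₁ (lam * f₁ x + q₁ x * f₂ x) x)
    (hf₂ : ∀ x, HasDerivAt f₂ (q₂ x * f₁ x - lam * f₂ x) x) :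
    ∀ x : ℝ,
      deriv (fun t => f₁ t ^ 2) x - 2 * lam * f₁ x ^ 2 -
        2 * q₁ x * (f₁ x₀ * f₂ x₀ +
          ∫ t in x₀..x, (q₂ t * f₁ t ^ 2 + q₁ t * f₂ t ^ 2)) = 0 ∧
      deriv (fun t => f₂ t ^ 2) x + 2 * lam * f₂ x ^ 2 -
        2 * q₂ x * (f₁ x₀ * f₂ x₀ +
          ∫ t in x₀..x, (q₂ t * f₁ t ^ 2 + q₁ t * f₂ t ^ 2)) = 0 := by
  intro x
  rw [dirac_deriv_sq_fst (hf₁ x), dirac_deriv_sq_snd (hf₂ x),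
    ← dirac_mul_eq_add_integral hq₁ hq₂ hf₁ hf₂ x₀ x]
  constructor <;> ring
end
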